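/- arXiv:1807.04027 — 9 statements merged into one kernel-verified Lean document; each statement's English description precedes it below -/
import Mathlib

section
/- Let (α_n), (β_n) be sequences of nonnegative reals and let (η_n), (ε_n) be summable sequences of nonnegative reals such that for all n, α_{n+1} ≤ (1+η_n)·α_n − β_n + ε_n. Then the sequence (β_n) is summable. -/
theorem stmt_3 (a b η ε : ℕ → ℝ)
    (ha : ∀ n, 0 ≤ a n) (hb : ∀ n, 0 ≤ b n)
    (hη0 : ∀ n, 0 ≤ η n) (hε0 : ∀ n, 0 ≤ ε n)
    (hη : Summable η) (hε : Summable ε)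
    (hrec : ∀ n, a (n + 1) ≤ (1 + η n) * a n - b n + ε n) :
    Summable b := by
  set P : ℕ → ℝ := fun n => ∏ k ∈ Finset.range n, (1 + η k) with hP
  have hP1 : ∀ n, 1 ≤ P n := by
    intro n
    simp only [hP]
    induction n with
    | zero => simp
    | succ m ih => rw [Finset.prod_range_succ]; nlinarith [hη0 m]
  have hPexp : ∀ n, P n ≤ Real.exp (∑' k, η k) := by
    intro n
    calc P n ≤ ∏ k ∈ Finset.range n, Real.exp (η k) := by
          apply Finset.prod_le_prod
          · intro k _; linarith [hη0 k]
          · intro k _; linarith [Real.add_one_le_exp (η k)]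
      _ = Real.exp (∑ k ∈ Finset.range n, η k) := by rw [Real.exp_sum]
      _ ≤ Real.exp (∑' k, η k) := by
          apply Real.exp_le_exp.2
          exact Summable.sum_le_tsum _ (fun k _ => hη0 k) hη
  have haP : ∀ n, a n ≤ P n * (a 0 + ∑ k ∈ Finset.range n, ε k) := by
    intro n
    induction n with
    | zero => simp [hP]
    | succ n ih =>
      have h1 : a (n + 1) ≤ (1 + η n) * a n + ε n := by
        have := hrec n; linarith [hb n]
      have h2 : (1 + η n) * a n ≤ (1 + η n) * (P n * (a 0 + ∑ k ∈ Finset.range n, ε k)) := by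
        apply mul_le_mul_of_nonneg_left ih
        linarith [hη0 n]
      have hPn1 : P (n + 1) = (1 + η n) * P n := by
        simp [hP, Finset.prod_range_succ]; ring
      have hεn : ε n ≤ P (n + 1) * ε n := le_mul_of_one_le_left (hε0 n) (hP1 (n + 1))
      calc a (n + 1) ≤ (1 + η n) * (P n * (a 0 + ∑ k ∈ Finset.range n, ε k)) + ε n := by
            linarith
        _ ≤ P (n + 1) * (a 0 + ∑ k ∈ Finset.range n, ε k) + P (n + 1) * ε n := by
            rw [hPn1] at hεn ⊢; ring_nf at hεn ⊢; linarith
        _ = P (n + 1) * (a 0 + ∑ k ∈ Finset.range (n + 1), ε k) := by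
            rw [Finset.sum_range_succ]; ring
  set M : ℝ := Real.exp (∑' k, η k) * (a 0 + ∑' k, ε k) with hM
  have haM : ∀ n, a n ≤ M := by
    intro n
    have h1 : a 0 + ∑ k ∈ Finset.range n, ε k ≤ a 0 + ∑' k, ε k := by
      have := Summable.sum_le_tsum (Finset.range n) (fun k _ => hε0 k) hε
      linarith
    have h2 : 0 ≤ a 0 + ∑ k ∈ Finset.range n, ε k := by
      have : 0 ≤ ∑ k ∈ Finset.range n, ε k := Finset.sum_nonneg (fun k _ => hε0 k)
      linarith [ha 0]
    calc a n ≤ P n * (a 0 + ∑ k ∈ Finset.range n, ε k) := haP n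
      _ ≤ Real.exp (∑' k, η k) * (a 0 + ∑' k, ε k) := by
          apply mul_le_mul (hPexp n) h1 h2 (Real.exp_nonneg _)
  apply summable_of_sum_range_le (fun n => hb n)
  intro N
  have key : ∀ n ∈ Finset.range N, b n ≤ (a n - a (n + 1)) + η n * M + ε n := by
    intro n _
    have h1 := hrec n
    have h2 : η n * a n ≤ η n * M := mul_le_mul_of_nonneg_left (haM n) (hη0 n)
    nlinarith
  calc ∑ n ∈ Finset.range N, b n
      ≤ ∑ n ∈ Finset.range N, ((a n - a (n + 1)) + η n * M + ε n) :=
        Finset.sum_le_sum key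
    _ = (a 0 - a N) + (∑ n ∈ Finset.range N, η n * M) + ∑ n ∈ Finset.range N, ε n := by
        rw [Finset.sum_add_distrib, Finset.sum_add_distrib, Finset.sum_range_sub' a]
    _ ≤ a 0 + (∑' n, η n * M) + ∑' n, ε n := by
        have hs1 := Summable.sum_le_tsum (Finset.range N)
          (fun k _ => mul_nonneg (hη0 k) (le_trans (ha 0) (haM 0))) (hη.mul_right M)
        have hs2 := Summable.sum_le_tsum (Finset.range N) (fun k _ => hε0 k) hε
        linarith [ha N]
end

section
/- Let (α_n) be a sequence of nonnegative reals and let (η_n), (ε_n) be summable sequences of nonnegative reals such that for all n, α_{n+1} ≤ (1+η_n)·α_n + ε_n. Then (α_n) is bounded and converges. -/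
theorem stmt_4 (a η ε : ℕ → ℝ)
    (ha : ∀ n, 0 ≤ a n)
    (hη0 : ∀ n, 0 ≤ η n) (hε0 : ∀ n, 0 ≤ ε n)
    (hη : Summable η) (hε : Summable ε)
    (hrec : ∀ n, a (n + 1) ≤ (1 + η n) * a n + ε n) :
    (∃ M : ℝ, ∀ n, a n ≤ M) ∧ ∃ l : ℝ, Filter.Tendsto a Filter.atTop (nhds l) := by
  set P : ℕ → ℝ := fun n => ∏ k ∈ Finset.range n, (1 + η k) with hPdef
  have hP1 : ∀ n, 1 ≤ P n := by
    intro n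
    simp only [hPdef]
    calc (1:ℝ) = ∏ _k ∈ Finset.range n, 1 := by simp
      _ ≤ ∏ k ∈ Finset.range n, (1 + η k) :=
        Finset.prod_le_prod (fun k _ => zero_le_one) (fun k _ => by linarith [hη0 k])
  have hPpos : ∀ n, 0 < P n := fun n => lt_of_lt_of_le one_pos (hP1 n)
  have hPsucc : ∀ n, P (n + 1) = P n * (1 + η n) := fun n => Finset.prod_range_succ _ n
  have hPmono : Monotone P := monotone_nat_of_le_succ (fun n => by
    rw [hPsucc]; nlinarith [hPpos n, hη0 n])
  have hPbd : ∀ n, P n ≤ Real.exp (∑' k, η k) := by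
    intro n
    simp only [hPdef]
    calc ∏ k ∈ Finset.range n, (1 + η k) ≤ ∏ k ∈ Finset.range n, Real.exp (η k) :=
          Finset.prod_le_prod (fun k _ => by linarith [hη0 k])
            (fun k _ => by linarith [Real.add_one_le_exp (η k)])
      _ = Real.exp (∑ k ∈ Finset.range n, η k) := (Real.exp_sum _ _).symm
      _ ≤ Real.exp (∑' k, η k) := Real.exp_le_exp.2 (Summable.sum_le_tsum _ (fun k _ => hη0 k) hη)
  set b : ℕ → ℝ := fun n => a n / P n with hbdef
  have hb0 : ∀ n, 0 ≤ b n := fun n => div_nonneg (ha n) (hPpos n).le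
  have hab : ∀ n, a n = b n * P n := fun n => (div_mul_cancel₀ _ (hPpos n).ne').symm
  have hbrec : ∀ n, b (n + 1) ≤ b n + ε n := by
    intro n
    rw [hbdef]
    rw [div_le_iff₀ (hPpos (n + 1))]
    have key : a n / P n * P (n + 1) = (1 + η n) * a n := by
      rw [hPsucc]
      field_simp [(hPpos n).ne']
    calc a (n + 1) ≤ (1 + η n) * a n + ε n := hrec n
      _ ≤ (1 + η n) * a n + ε n * P (n + 1) := by nlinarith [hε0 n, hP1 (n + 1)]
      _ = (a n / P n + ε n) * P (n + 1) := by rw [add_mul (a n / P n) (ε n), key]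
  set S : ℕ → ℝ := fun n => ∑ k ∈ Finset.range n, ε k with hSdef
  have hSle : ∀ n, S n ≤ ∑' k, ε k := fun n => Summable.sum_le_tsum _ (fun k _ => hε0 k) hε
  set d : ℕ → ℝ := fun n => b n - S n with hddef
  have hdanti : Antitone d := antitone_nat_of_succ_le (fun n => by
    have := hbrec n
    have hS : S (n + 1) = S n + ε n := Finset.sum_range_succ _ n
    simp only [hddef, hS]
    linarith)
  have hdbd : ∀ n, -(∑' k, ε k) ≤ d n := fun n => by
    have := hb0 n; have := hSle n; simp only [hddef]; linarith
  -- Boundedness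
  have hb00 : b 0 = a 0 := by simp [hbdef, hPdef]
  have hS0 : S 0 = 0 := by simp [hSdef]
  have hbbd : ∀ n, b n ≤ a 0 + ∑' k, ε k := by
    intro n
    have h1 : d n ≤ d 0 := hdanti (Nat.zero_le n)
    simp only [hddef] at h1
    linarith [hSle n, hb00, hS0]
  have hbound : ∀ n, a n ≤ (a 0 + ∑' k, ε k) * Real.exp (∑' k, η k) := by
    intro n
    rw [hab n]
    have h1 := hbbd n
    have h2 := hPbd n
    have h3 := hb0 n
    have h4 := hP1 n
    nlinarith
  refine ⟨⟨_, hbound⟩, ?_⟩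
  -- Convergence
  have hd_t : Filter.Tendsto d Filter.atTop (nhds (⨅ n, d n)) :=
    tendsto_atTop_ciInf hdanti ⟨-(∑' k, ε k), fun x ⟨n, hn⟩ => hn ▸ hdbd n⟩
  have hS_t : Filter.Tendsto S Filter.atTop (nhds (∑' k, ε k)) :=
    hε.hasSum.tendsto_sum_nat
  have hb_t : Filter.Tendsto b Filter.atTop (nhds ((⨅ n, d n) + ∑' k, ε k)) := by
    have := hd_t.add hS_t
    convert this using 2 with n
    simp [hddef]
  have hP_t : Filter.Tendsto P Filter.atTop (nhds (⨆ n, P n)) :=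
    tendsto_atTop_ciSup hPmono ⟨Real.exp (∑' k, η k), fun x ⟨n, hn⟩ => hn ▸ hPbd n⟩
  refine ⟨((⨅ n, d n) + ∑' k, ε k) * (⨆ n, P n), ?_⟩
  have := hb_t.mul hP_t
  convert this using 2 with n
  exact hab n
end

section
/- Let H be a real Hilbert space, let α > 0, let U be a bounded self-adjoint operator on H with U ≽ α·Id, let β > 0, and let B : H → H be β-cocoercive, i.e., ⟨x − y, Bx − By⟩ ≥ β‖Bx − By‖² for all x, y. Let γ ∈ (0, 2β/‖U‖]. Then the operator Id − γ·U∘B is (γ‖U‖/(2β))-averaged with respect to the inner product ⟨x,y⟩_{U⁻¹} = ⟨U⁻¹x, y⟩. -/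
open RealInnerProductSpace

theorem stmt_6 {H : Type*} [NormedAddCommGroup H] [InnerProductSpace ℝ H] [CompleteSpace H]
    (α : ℝ) (hα : 0 < α)
    (U Uinv : H →L[ℝ] H) (hU : IsSelfAdjoint U)
    (hUα : ∀ x : H, α * ‖x‖ ^ 2 ≤ ⟪U x, x⟫)
    (hinv₁ : U.comp Uinv = ContinuousLinearMap.id ℝ H)
    (hinv₂ : Uinv.comp U = ContinuousLinearMap.id ℝ H)
    (β : ℝ) (hβ : 0 < β)
    (B : H → H)
    (hB : ∀ x y : H, β * ‖B x - B y‖ ^ 2 ≤ ⟪x - y, B x - B y⟫)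
    (γ : ℝ) (hγ : γ ∈ Set.Ioc (0 : ℝ) (2 * β / ‖U‖)) :
    ∀ x y : H,
      ⟪Uinv ((x - γ • U (B x)) - (y - γ • U (B y))),
          (x - γ • U (B x)) - (y - γ • U (B y))⟫ ≤
        ⟪Uinv (x - y), x - y⟫ -
          ((1 - γ * ‖U‖ / (2 * β)) / (γ * ‖U‖ / (2 * β))) *
            ⟪Uinv (γ • U (B x) - γ • U (B y)), γ • U (B x) - γ • U (B y)⟫ := by
  intro x y
  obtain ⟨hγ0, hγ2⟩ := hγ
  have hUnorm : 0 < ‖U‖ := by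
    rcases (norm_nonneg U).lt_or_eq with h | h
    · exact h
    · exfalso; rw [← h, div_zero] at hγ2; linarith
  set u := x - y with hu
  set v := B x - B y with hv
  have hinvU : ∀ z : H, Uinv (U z) = z := fun z => by
    have := ContinuousLinearMap.ext_iff.mp hinv₂ z
    simpa using this
  have hUinv : ∀ z : H, U (Uinv z) = z := fun z => by
    have := ContinuousLinearMap.ext_iff.mp hinv₁ z
    simpa using this
  have hTx : (x - γ • U (B x)) - (y - γ • U (B y)) = u - γ • U v := by
    rw [hv, map_sub, smul_sub, hu]; abel
  have hw : γ • U (B x) - γ • U (B y) = γ • U v := by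
    rw [hv, map_sub, smul_sub]
  -- Uinv of the step
  have hUinvw : Uinv (γ • U v) = γ • v := by rw [map_smul, hinvU]
  -- symmetry fact: ⟪Uinv u, U v⟫ = ⟪u, v⟫
  have hsym : ⟪Uinv u, U v⟫ = ⟪u, v⟫ := by
    have h := hU.isSymmetric (Uinv u) v
    simp only [ContinuousLinearMap.coe_coe] at h
    rw [← h, hUinv]
  have h1 : ⟪Uinv (u - γ • U v), u - γ • U v⟫
      = ⟪Uinv u, u⟫ - 2 * γ * ⟪u, v⟫ + γ ^ 2 * ⟪v, U v⟫ := by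
    rw [map_sub, hUinvw]
    simp only [inner_sub_left, inner_sub_right, real_inner_smul_left, real_inner_smul_right]
    rw [hsym, real_inner_comm v u]
    ring
  have h2 : ⟪Uinv (γ • U v), γ • U v⟫ = γ ^ 2 * ⟪v, U v⟫ := by
    rw [hUinvw, real_inner_smul_left, real_inner_smul_right]; ring
  rw [hTx, hw, h1, h2]
  -- reduce to the key scalar inequality
  have hcoc : β * ‖v‖ ^ 2 ≤ ⟪u, v⟫ := hB x y
  have hbound : ⟪v, U v⟫ ≤ ‖U‖ * ‖v‖ ^ 2 := by
    calc ⟪v, U v⟫ ≤ ‖v‖ * ‖U v‖ := real_inner_le_norm v (U v)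
    _ ≤ ‖v‖ * (‖U‖ * ‖v‖) := by
        have := U.le_opNorm v
        nlinarith [norm_nonneg v]
    _ = ‖U‖ * ‖v‖ ^ 2 := by ring
  have hδ : γ * ‖U‖ / (2 * β) ≠ 0 := by positivity
  have key : 2 * β / ‖U‖ * ⟪v, U v⟫ ≤ 2 * ⟪u, v⟫ := by
    have h3 : 2 * β / ‖U‖ * ⟪v, U v⟫ ≤ 2 * β / ‖U‖ * (‖U‖ * ‖v‖ ^ 2) := by
      apply mul_le_mul_of_nonneg_left hbound; positivity
    have h4 : 2 * β / ‖U‖ * (‖U‖ * ‖v‖ ^ 2) = 2 * (β * ‖v‖ ^ 2) := by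
      field_simp
    linarith
  have hexp : (1 - γ * ‖U‖ / (2 * β)) / (γ * ‖U‖ / (2 * β))
      = 2 * β / (γ * ‖U‖) - 1 := by
    field_simp
  rw [hexp]
  have hγne : γ ≠ 0 := ne_of_gt hγ0
  have : (2 * β / (γ * ‖U‖) - 1) * (γ ^ 2 * ⟪v, U v⟫)
      = γ * (2 * β / ‖U‖ * ⟪v, U v⟫) - γ ^ 2 * ⟪v, U v⟫ := by
    field_simp
  rw [this]
  nlinarith [mul_le_mul_of_nonneg_left key (le_of_lt hγ0)]
end

section
/- Let H be a real Hilbert space, let α > 0, let U be a bounded self-adjoint operator on H with U ≽ α·Id, let β > 0, and let B : H → H be β-cocoercive. Then for all x, y ∈ H, ⟨x − y, U(Bx) − U(By)⟩_{U⁻¹} ≥ (β/‖U‖)·‖U(Bx) − U(By)‖²_{U⁻¹}, i.e., U∘B is (β/‖U‖)-cocoercive in the Hilbert space (H, U⁻¹). -/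
open RealInnerProductSpace

theorem stmt_7 {H : Type*} [NormedAddCommGroup H] [InnerProductSpace ℝ H] [CompleteSpace H]
    (α : ℝ) (hα : 0 < α)
    (U Uinv : H →L[ℝ] H) (hU : IsSelfAdjoint U)
    (hUα : ∀ x : H, α * ‖x‖ ^ 2 ≤ ⟪U x, x⟫)
    (hinv₁ : U.comp Uinv = ContinuousLinearMap.id ℝ H)
    (hinv₂ : Uinv.comp U = ContinuousLinearMap.id ℝ H)
    (β : ℝ) (hβ : 0 < β)
    (B : H → H)
    (hB : ∀ x y : H, β * ‖B x - B y‖ ^ 2 ≤ ⟪x - y, B x - B y⟫) :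
    ∀ x y : H,
      (β / ‖U‖) * ⟪Uinv (U (B x) - U (B y)), U (B x) - U (B y)⟫ ≤
        ⟪Uinv (x - y), U (B x) - U (B y)⟫ := by
  intro x y
  set b := B x - B y with hb
  have hUb : U (B x) - U (B y) = U b := by simp [hb, map_sub]
  have hUinvU : ∀ z : H, Uinv (U z) = z := fun z =>
    congrFun (congrArg DFunLike.coe hinv₂) z
  have hsym := hU.isSymmetric
  rcases eq_or_lt_of_le (norm_nonneg U) with h0 | hpos
  · -- U = 0, degenerate case
    have hU0 : U = 0 := norm_eq_zero.mp h0.symm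
    have hUb0 : U (B x) - U (B y) = 0 := by rw [hU0]; simp
    simp [hUb0]
  · rw [hUb, hUinvU b]
    have hrhs : ⟪Uinv (x - y), U b⟫ = ⟪x - y, b⟫ := by
      have hid : U (Uinv (x - y)) = x - y := by
        have := congrFun (congrArg DFunLike.coe hinv₁) (x - y)
        simpa using this
      calc ⟪Uinv (x - y), U b⟫ = ⟪U b, Uinv (x - y)⟫ := real_inner_comm _ _
        _ = ⟪b, U (Uinv (x - y))⟫ := hsym b (Uinv (x - y))
        _ = ⟪b, x - y⟫ := by rw [hid]
        _ = ⟪x - y, b⟫ := real_inner_comm _ _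
    rw [hrhs]
    have h1 : ⟪b, U b⟫ ≤ ‖U‖ * ‖b‖ ^ 2 := by
      calc ⟪b, U b⟫ ≤ ‖b‖ * ‖U b‖ := real_inner_le_norm _ _
        _ ≤ ‖b‖ * (‖U‖ * ‖b‖) := by
            have := U.le_opNorm b
            nlinarith [norm_nonneg b]
        _ = ‖U‖ * ‖b‖ ^ 2 := by ring
    have h2 : (β / ‖U‖) * ⟪b, U b⟫ ≤ β * ‖b‖ ^ 2 := by
      have : (β / ‖U‖) * ⟪b, U b⟫ ≤ (β / ‖U‖) * (‖U‖ * ‖b‖ ^ 2) := by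
        apply mul_le_mul_of_nonneg_left h1 (le_of_lt (div_pos hβ hpos))
      calc (β / ‖U‖) * ⟪b, U b⟫ ≤ (β / ‖U‖) * (‖U‖ * ‖b‖ ^ 2) := this
        _ = β * ‖b‖ ^ 2 := by field_simp
    exact h2.trans (hB x y)
end

section
/- Let H be a real Hilbert space with inner product ⟨·,·⟩, let T₁ be α₁-averaged and T₂ be α₂-averaged operators on H with α₁, α₂ ∈ (0,1). Then the composition T₁∘T₂ is φ-averaged where φ = (α₁ + α₂ − 2α₁α₂)/(1 − α₁α₂), and φ ∈ (0,1). -/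
/-
An operator is α-averaged exactly when its squared displacement `‖Tx - Ty‖²` falls short of
`‖x - y‖²` by at least `κ = (1 - α)/α` times the squared displacement of the residual `Id - T`.
For `T₁ ∘ T₂` the residual is the sum `u + v` of the residuals of `T₂` at `x, y` and of `T₁` at
`T₂ x, T₂ y`; chaining the two inequalities leaves a gap of `κ₁‖v‖² + κ₂‖u‖²`, which dominates
`κ₁κ₂/(κ₁ + κ₂) ‖u + v‖²` by the weighted parallelogram inequality. It remains to check that
`κ₁κ₂/(κ₁ + κ₂) = (1 - φ)/φ`.
-/

theorem harmonic_mul_norm_add_sq_le {H : Type*} [NormedAddCommGroup H] [InnerProductSpace ℝ H]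
    {a b : ℝ} (ha : 0 < a) (hb : 0 < b) (u v : H) :
    a * b / (a + b) * ‖u + v‖ ^ 2 ≤ a * ‖u‖ ^ 2 + b * ‖v‖ ^ 2 := by
  have hsq : 0 ≤ ‖a • u - b • v‖ ^ 2 := by positivity
  rw [norm_sub_sq_real, inner_smul_left, inner_smul_right, norm_smul, norm_smul,
    Real.norm_of_nonneg ha.le, Real.norm_of_nonneg hb.le] at hsq
  rw [div_mul_eq_mul_div, div_le_iff₀ (by positivity), norm_add_sq_real]
  simp only [conj_trivial] at hsq
  nlinarith

/-- With `κ = (1 - α)/α` this is the standard characterization of an α-averaged operator. -/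
def AveragedIneq {H : Type*} [NormedAddCommGroup H] (κ : ℝ) (T : H → H) : Prop :=
  ∀ x y : H, ‖T x - T y‖ ^ 2 ≤ ‖x - y‖ ^ 2 - κ * ‖(x - T x) - (y - T y)‖ ^ 2

theorem AveragedIneq.comp {H : Type*} [NormedAddCommGroup H] [InnerProductSpace ℝ H]
    {κ₁ κ₂ : ℝ} {T₁ T₂ : H → H} (hκ₁ : 0 < κ₁) (hκ₂ : 0 < κ₂)
    (h₁ : AveragedIneq κ₁ T₁) (h₂ : AveragedIneq κ₂ T₂) :
    AveragedIneq (κ₁ * κ₂ / (κ₁ + κ₂)) (T₁ ∘ T₂) := by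
  intro x y
  have hsplit : (x - T₁ (T₂ x)) - (y - T₁ (T₂ y)) =
      ((T₂ x - T₁ (T₂ x)) - (T₂ y - T₁ (T₂ y))) + ((x - T₂ x) - (y - T₂ y)) := by abel
  simp only [Function.comp_apply, hsplit]
  linarith [h₁ (T₂ x) (T₂ y), h₂ x y, harmonic_mul_norm_add_sq_le hκ₁ hκ₂
    ((T₂ x - T₁ (T₂ x)) - (T₂ y - T₁ (T₂ y))) ((x - T₂ x) - (y - T₂ y))]

theorem averaged_comp_param_mem_Ioo {α₁ α₂ : ℝ} (hα₁ : α₁ ∈ Set.Ioo (0 : ℝ) 1)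
    (hα₂ : α₂ ∈ Set.Ioo (0 : ℝ) 1) :
    (α₁ + α₂ - 2 * α₁ * α₂) / (1 - α₁ * α₂) ∈ Set.Ioo (0 : ℝ) 1 := by
  obtain ⟨h₁, h₁'⟩ := hα₁
  obtain ⟨h₂, h₂'⟩ := hα₂
  have hden : 0 < 1 - α₁ * α₂ := by nlinarith
  exact ⟨div_pos (by nlinarith) hden, (div_lt_one hden).2 (by nlinarith)⟩

theorem averaged_comp_param_ratio {α₁ α₂ : ℝ} (hα₁ : α₁ ∈ Set.Ioo (0 : ℝ) 1)
    (hα₂ : α₂ ∈ Set.Ioo (0 : ℝ) 1) :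
    (1 - (α₁ + α₂ - 2 * α₁ * α₂) / (1 - α₁ * α₂)) / ((α₁ + α₂ - 2 * α₁ * α₂) / (1 - α₁ * α₂)) =
      (1 - α₁) / α₁ * ((1 - α₂) / α₂) / ((1 - α₁) / α₁ + (1 - α₂) / α₂) := by
  obtain ⟨h₁, h₁'⟩ := hα₁
  obtain ⟨h₂, h₂'⟩ := hα₂
  have hden : 1 - α₁ * α₂ ≠ 0 := by nlinarith
  have hnum : α₁ + α₂ - 2 * α₁ * α₂ ≠ 0 := by nlinarith
  rw [one_sub_div hden, div_div_div_cancel_right₀ hden, div_add_div _ _ h₁.ne' h₂.ne',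
    div_mul_div_comm, div_div_div_cancel_right₀ (mul_ne_zero h₁.ne' h₂.ne'),
    div_eq_div_iff hnum (by contrapose! hnum; linarith)]
  ring

theorem stmt_8_general {H : Type*} [NormedAddCommGroup H] [InnerProductSpace ℝ H]
    (α₁ α₂ : ℝ) (hα₁ : α₁ ∈ Set.Ioo (0 : ℝ) 1) (hα₂ : α₂ ∈ Set.Ioo (0 : ℝ) 1)
    (T₁ T₂ : H → H)
    (hT₁ : ∀ x y : H, ‖T₁ x - T₁ y‖ ^ 2 ≤
      ‖x - y‖ ^ 2 - ((1 - α₁) / α₁) * ‖(x - T₁ x) - (y - T₁ y)‖ ^ 2)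
    (hT₂ : ∀ x y : H, ‖T₂ x - T₂ y‖ ^ 2 ≤
      ‖x - y‖ ^ 2 - ((1 - α₂) / α₂) * ‖(x - T₂ x) - (y - T₂ y)‖ ^ 2) :
    (α₁ + α₂ - 2 * α₁ * α₂) / (1 - α₁ * α₂) ∈ Set.Ioo (0 : ℝ) 1 ∧
    ∀ x y : H, ‖T₁ (T₂ x) - T₁ (T₂ y)‖ ^ 2 ≤
      ‖x - y‖ ^ 2 -
        ((1 - (α₁ + α₂ - 2 * α₁ * α₂) / (1 - α₁ * α₂)) /
            ((α₁ + α₂ - 2 * α₁ * α₂) / (1 - α₁ * α₂))) *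
          ‖(x - T₁ (T₂ x)) - (y - T₁ (T₂ y))‖ ^ 2 := by
  have hκ : ∀ {α : ℝ}, α ∈ Set.Ioo (0 : ℝ) 1 → 0 < (1 - α) / α :=
    fun hα => div_pos (sub_pos.2 hα.2) hα.1
  refine ⟨averaged_comp_param_mem_Ioo hα₁ hα₂, ?_⟩
  rw [averaged_comp_param_ratio hα₁ hα₂]
  exact AveragedIneq.comp (hκ hα₁) (hκ hα₂) hT₁ hT₂

theorem stmt_8 {H : Type*} [NormedAddCommGroup H] [InnerProductSpace ℝ H] [CompleteSpace H]
    (α₁ α₂ : ℝ) (hα₁ : α₁ ∈ Set.Ioo (0 : ℝ) 1) (hα₂ : α₂ ∈ Set.Ioo (0 : ℝ) 1)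
    (T₁ T₂ : H → H)
    (hT₁ : ∀ x y : H, ‖T₁ x - T₁ y‖ ^ 2 ≤
      ‖x - y‖ ^ 2 - ((1 - α₁) / α₁) * ‖(x - T₁ x) - (y - T₁ y)‖ ^ 2)
    (hT₂ : ∀ x y : H, ‖T₂ x - T₂ y‖ ^ 2 ≤
      ‖x - y‖ ^ 2 - ((1 - α₂) / α₂) * ‖(x - T₂ x) - (y - T₂ y)‖ ^ 2) :
    (α₁ + α₂ - 2 * α₁ * α₂) / (1 - α₁ * α₂) ∈ Set.Ioo (0 : ℝ) 1 ∧
    ∀ x y : H, ‖T₁ (T₂ x) - T₁ (T₂ y)‖ ^ 2 ≤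
      ‖x - y‖ ^ 2 -
        ((1 - (α₁ + α₂ - 2 * α₁ * α₂) / (1 - α₁ * α₂)) /
            ((α₁ + α₂ - 2 * α₁ * α₂) / (1 - α₁ * α₂))) *
          ‖(x - T₁ (T₂ x)) - (y - T₁ (T₂ y))‖ ^ 2 :=
  stmt_8_general α₁ α₂ hα₁ hα₂ T₁ T₂ hT₁ hT₂
end

section
/- Let H be a real Hilbert space, let α > 0, let U be a bounded self-adjoint operator on H with U ≽ α·Id, and let A : H → 2^H be maximally monotone. Then the resolvent J_{UA} = (Id + U∘A)⁻¹ of the operator U∘A is a (1/2)-averaged (i.e., firmly nonexpansive) single-valued operator on the Hilbert space (H, U⁻¹) with inner product ⟨x,y⟩_{U⁻¹} = ⟨U⁻¹x, y⟩. -/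
set_option maxHeartbeats 1000000
open RealInnerProductSpace

/-- A set-valued operator is monotone. -/
def IsMonotoneOp {H : Type*} [NormedAddCommGroup H] [InnerProductSpace ℝ H]
    (A : H → Set H) : Prop :=
  ∀ x y u v, u ∈ A x → v ∈ A y → (0 : ℝ) ≤ ⟪u - v, x - y⟫

/-- A set-valued operator is maximally monotone. -/
def IsMaximallyMonotoneOp {H : Type*} [NormedAddCommGroup H] [InnerProductSpace ℝ H]
    (A : H → Set H) : Prop :=
  IsMonotoneOp A ∧ ∀ x u, (∀ y v, v ∈ A y → (0 : ℝ) ≤ ⟪u - v, x - y⟫) → u ∈ A x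

section Aux
variable {H : Type*} [NormedAddCommGroup H] [InnerProductSpace ℝ H]

lemma inner_expand_t (T : H →L[ℝ] H) (hT : ∀ a b : H, ⟪T a, b⟫ = ⟪T b, a⟫)
    (a b : H) (t : ℝ) :
    ⟪T (a + t • b), a + t • b⟫ = ⟪T a, a⟫ + 2*t*⟪T a, b⟫ + t^2*⟪T b, b⟫ := by
  rw [map_add, map_smul]
  simp only [inner_add_left, inner_add_right, real_inner_smul_left, real_inner_smul_right]
  rw [hT b a]
  ring

lemma inner_expand_mid (T : H →L[ℝ] H) (hT : ∀ a b : H, ⟪T a, b⟫ = ⟪T b, a⟫)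
    (a b : H) :
    ⟪T ((2:ℝ)⁻¹ • (a + b)), (2:ℝ)⁻¹ • (a + b)⟫
      = (⟪T a, a⟫ + ⟪T b, b⟫)/2 - ⟪T (a - b), a - b⟫/4 := by
  rw [map_smul, map_add, map_sub]
  simp only [inner_add_left, inner_add_right, inner_sub_left, inner_sub_right,
    real_inner_smul_left, real_inner_smul_right]
  rw [hT b a]
  ring
end Aux

section Minty
variable {H : Type*} [NormedAddCommGroup H] [InnerProductSpace ℝ H] [CompleteSpace H]

lemma minty_zero (α : ℝ) (hα : 0 < α)
    (U Uinv : H →L[ℝ] H) (hU : IsSelfAdjoint U)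
    (hUα : ∀ x : H, α * ‖x‖ ^ 2 ≤ ⟪U x, x⟫)
    (hinv₁ : U.comp Uinv = ContinuousLinearMap.id ℝ H)
    (hinv₂ : Uinv.comp U = ContinuousLinearMap.id ℝ H)
    (A : H → Set H) (hA : IsMaximallyMonotoneOp A) :
    ∃ x u, u ∈ A x ∧ x + U u = 0 := by
  -- basic operator facts
  have hUUinv : ∀ a : H, U (Uinv a) = a := fun a => DFunLike.congr_fun hinv₁ a
  have hUinvU : ∀ a : H, Uinv (U a) = a := fun a => DFunLike.congr_fun hinv₂ a
  have hUsym : ∀ a b : H, ⟪U a, b⟫ = ⟪a, U b⟫ := fun a b => hU.isSymmetric a b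
  have hUsym2 : ∀ a b : H, ⟪U a, b⟫ = ⟪U b, a⟫ := fun a b => by
    rw [hUsym, real_inner_comm]
  have hUinvsym : ∀ a b : H, ⟪Uinv a, b⟫ = ⟪Uinv b, a⟫ := fun a b => by
    conv_lhs => rw [← hUUinv b, ← hUsym, hUUinv]
    exact real_inner_comm _ _
  have hcross : ∀ a b : H, ⟪Uinv a, U b⟫ = ⟪a, b⟫ := fun a b => by
    rw [← hUsym, hUUinv]
  have hcross2 : ∀ a b : H, ⟪Uinv (U a), b⟫ = ⟪a, b⟫ := fun a b => by rw [hUinvU]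
  have hUpos : ∀ w : H, 0 ≤ ⟪U w, w⟫ := fun w => le_trans (by positivity) (hUα w)
  have hbpos : ∀ x : H, 0 ≤ ⟪Uinv x, x⟫ := fun x => by
    have h := hUpos (Uinv x)
    rw [hUUinv] at h
    rwa [real_inner_comm] at h
  set c : ℝ := α/(‖U‖+1)^2 with hc_def
  have hcpos : 0 < c := by positivity
  have hbcoer : ∀ x : H, c * ‖x‖^2 ≤ ⟪Uinv x, x⟫ := by
    intro x
    have h1 : ‖x‖ ≤ (‖U‖+1) * ‖Uinv x‖ := by
      calc ‖x‖ = ‖U (Uinv x)‖ := by rw [hUUinv]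
        _ ≤ ‖U‖ * ‖Uinv x‖ := U.le_opNorm _
        _ ≤ (‖U‖+1) * ‖Uinv x‖ := by nlinarith [norm_nonneg (Uinv x)]
    have h2 : α * ‖Uinv x‖^2 ≤ ⟪Uinv x, x⟫ := by
      have h := hUα (Uinv x)
      rw [hUUinv] at h
      rwa [real_inner_comm] at h
    have h3 : ‖x‖^2 ≤ (‖U‖+1)^2 * ‖Uinv x‖^2 := by nlinarith [norm_nonneg x]
    rw [hc_def]
    rw [div_mul_eq_mul_div, div_le_iff₀ (by positivity)]
    nlinarith
  -- expansion of the U⁻¹-norm of x + U u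
  have hNexp : ∀ x u : H, ⟪Uinv (x + U u), x + U u⟫
      = ⟪Uinv x, x⟫ + 2*⟪u, x⟫ + ⟪U u, u⟫ := by
    intro x u
    rw [map_add]
    simp only [inner_add_left, inner_add_right]
    rw [hcross, hcross2, hcross2, real_inner_comm x u, real_inner_comm (U u) u]
    ring
  -- graph is nonempty
  obtain ⟨y₀, v₀, hv₀⟩ : ∃ y v, v ∈ A y := by
    by_contra h
    push_neg at h
    exact h 0 0 (hA.2 0 0 (fun y v hv => absurd hv (h y v)))
  -- the epigraph-style feasibility predicate
  set E : H → H → ℝ → Prop := fun x u r =>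
    ∀ y v, v ∈ A y → ⟪u, y⟫ + ⟪v, x⟫ - ⟪v, y⟫ + (⟪Uinv x, x⟫ + ⟪U u, u⟫)/2 ≤ r
    with hE_def
  set S : Set ℝ := {r | ∃ x u, E x u r} with hS_def
  -- key lower bound: pairing ≤ F
  have hkey : ∀ x u r, E x u r → ⟪u, x⟫ + (⟪Uinv x, x⟫ + ⟪U u, u⟫)/2 ≤ r := by
    intro x u r h
    by_cases hx : u ∈ A x
    · have h0 := h x u hx
      linarith
    · obtain ⟨y, v, hv, hlt⟩ : ∃ y v, v ∈ A y ∧ ⟪u - v, x - y⟫ < 0 := by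
        by_contra hcn
        push_neg at hcn
        exact hx (hA.2 x u (fun y v hv => hcn y v hv))
      have h0 := h y v hv
      have hexp : ⟪u,y⟫ + ⟪v,x⟫ - ⟪v,y⟫ = ⟪u,x⟫ - ⟪u-v, x-y⟫ := by
        simp only [inner_sub_left, inner_sub_right]; ring
      linarith
  have hsq : ∀ x u : H, 0 ≤ ⟪u, x⟫ + (⟪Uinv x, x⟫ + ⟪U u, u⟫)/2 := by
    intro x u
    have h0 := hbpos (x + U u)
    rw [hNexp] at h0
    linarith
  have hSbdd : BddBelow S := by
    refine ⟨0, fun r hr => ?_⟩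
    obtain ⟨x, u, hE⟩ := hr
    exact le_trans (hsq x u) (hkey x u r hE)
  have hSne : S.Nonempty := by
    refine ⟨⟪v₀, y₀⟫ + (⟪Uinv y₀, y₀⟫ + ⟪U v₀, v₀⟫)/2, y₀, v₀, ?_⟩
    intro y v hv
    have hm := hA.1 y₀ y v₀ v hv₀ hv
    simp only [inner_sub_left, inner_sub_right] at hm
    have : ⟪v₀, y⟫ = ⟪y, v₀⟫ := real_inner_comm _ _
    have h2 : ⟪v₀, y₀⟫ = ⟪y₀, v₀⟫ := real_inner_comm _ _
    linarith
  set d : ℝ := sInf S with hd_def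
  -- minimizing sequence
  have hseq : ∀ n : ℕ, ∃ p : H × H × ℝ, E p.1 p.2.1 p.2.2 ∧ p.2.2 < d + 1/(n+1) := by
    intro n
    have h1 : d < d + 1/((n:ℝ)+1) := by
      have : (0:ℝ) < 1/((n:ℝ)+1) := by positivity
      linarith
    obtain ⟨r, hrS, hrlt⟩ := exists_lt_of_csInf_lt hSne h1
    obtain ⟨x, u, hE⟩ := hrS
    exact ⟨⟨x, u, r⟩, hE, hrlt⟩
  choose p hEp hrp using hseq
  set xs : ℕ → H := fun n => (p n).1 with hxs
  set us : ℕ → H := fun n => (p n).2.1 with hus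
  set rs : ℕ → ℝ := fun n => (p n).2.2 with hrs
  have hrge : ∀ n, d ≤ rs n := fun n => csInf_le hSbdd ⟨xs n, us n, hEp n⟩
  have hrp' : ∀ n : ℕ, rs n < d + 1/((n:ℝ)+1) := fun n => hrp n
  -- midpoint estimate and Cauchy property
  have hmid : ∀ n m : ℕ,
      (⟪Uinv (xs n - xs m), xs n - xs m⟫ + ⟪U (us n - us m), us n - us m⟫)/8
        ≤ (rs n + rs m)/2 - d := by
    intro n m
    set δ : ℝ := (⟪Uinv (xs n - xs m), xs n - xs m⟫ + ⟪U (us n - us m), us n - us m⟫)/4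
      with hδ_def
    have hmem : E ((2:ℝ)⁻¹ • (xs n + xs m)) ((2:ℝ)⁻¹ • (us n + us m))
        ((rs n + rs m)/2 - δ/2) := by
      intro y v hv
      have h1 := hEp n y v hv
      have h2 := hEp m y v hv
      have e1 : ⟪(2:ℝ)⁻¹ • (us n + us m), y⟫ = (⟪us n, y⟫ + ⟪us m, y⟫)/2 := by
        rw [real_inner_smul_left, inner_add_left]; ring
      have e2 : ⟪v, (2:ℝ)⁻¹ • (xs n + xs m)⟫ = (⟪v, xs n⟫ + ⟪v, xs m⟫)/2 := by
        rw [real_inner_smul_right, inner_add_right]; ring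
      have e3 := inner_expand_mid Uinv hUinvsym (xs n) (xs m)
      have e4 := inner_expand_mid U hUsym2 (us n) (us m)
      rw [e1, e2, e3, e4]
      rw [hδ_def]
      linarith
    have : (rs n + rs m)/2 - δ/2 ∈ S := ⟨_, _, hmem⟩
    have hd := csInf_le hSbdd this
    rw [← hd_def] at hd
    linarith
  have hdist : ∀ N n m : ℕ, N ≤ n → N ≤ m →
      c * ‖xs n - xs m‖^2 + α * ‖us n - us m‖^2 ≤ 8/((N:ℝ)+1) := by
    intro N n m hn hm
    have h1 := hmid n m
    have h2 := hrp' n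
    have h3 := hrp' m
    have hn1 : 1/((n:ℝ)+1) ≤ 1/((N:ℝ)+1) := by
      apply one_div_le_one_div_of_le (by positivity)
      have : (N:ℝ) ≤ (n:ℝ) := Nat.cast_le.mpr hn
      linarith
    have hm1 : 1/((m:ℝ)+1) ≤ 1/((N:ℝ)+1) := by
      apply one_div_le_one_div_of_le (by positivity)
      have : (N:ℝ) ≤ (m:ℝ) := Nat.cast_le.mpr hm
      linarith
    have hb1 := hbcoer (xs n - xs m)
    have hb2 := hUα (us n - us m)
    have h8 : 8/((N:ℝ)+1) = 8*(1/((N:ℝ)+1)) := by ring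
    linarith
  have hcauchy : ∀ (s : ℕ → H) (κ : ℝ), 0 < κ →
      (∀ N n m : ℕ, N ≤ n → N ≤ m → κ * ‖s n - s m‖^2 ≤ 8/((N:ℝ)+1)) → CauchySeq s := by
    intro s κ hκ hs
    refine cauchySeq_of_le_tendsto_0 (fun N : ℕ => Real.sqrt (8/(κ*((N:ℝ)+1)))) ?_ ?_
    · intro n m N hn hm
      rw [dist_eq_norm]
      have h1 := hs N n m hn hm
      have hNpos : (0:ℝ) < (N:ℝ)+1 := by positivity
      have hca : ((N:ℝ)+1) * (8/((N:ℝ)+1)) = 8 := by field_simp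
      have h2 : ‖s n - s m‖^2 ≤ 8/(κ*((N:ℝ)+1)) := by
        rw [le_div_iff₀ (by positivity)]
        nlinarith [mul_le_mul_of_nonneg_left h1 hNpos.le, hca]
      calc ‖s n - s m‖ = Real.sqrt (‖s n - s m‖^2) := by
            rw [Real.sqrt_sq (norm_nonneg _)]
        _ ≤ Real.sqrt (8/(κ*((N:ℝ)+1))) := Real.sqrt_le_sqrt h2
    · have hl : Filter.Tendsto (fun N : ℕ => 8/(κ*((N:ℝ)+1))) Filter.atTop (nhds 0) := by
        have := tendsto_one_div_add_atTop_nhds_zero_nat.const_mul (8/κ)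
        simp only [mul_zero] at this
        convert this using 2 with N
        field_simp
      have h0 : Filter.Tendsto (fun N : ℕ => Real.sqrt (8/(κ*((N:ℝ)+1)))) Filter.atTop
          (nhds (Real.sqrt 0)) := (Real.continuous_sqrt.tendsto 0).comp hl
      rwa [Real.sqrt_zero] at h0
  have hxcauchy : CauchySeq xs := by
    apply hcauchy xs c hcpos
    intro N n m hn hm
    have := hdist N n m hn hm
    nlinarith [sq_nonneg ‖us n - us m‖, hα.le, norm_nonneg (us n - us m)]
  have hucauchy : CauchySeq us := by
    apply hcauchy us α hα
    intro N n m hn hm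
    have := hdist N n m hn hm
    nlinarith [sq_nonneg ‖xs n - xs m‖, hcpos.le, norm_nonneg (xs n - xs m)]
  obtain ⟨xb, hxb⟩ := cauchySeq_tendsto_of_complete hxcauchy
  obtain ⟨ub, hub⟩ := cauchySeq_tendsto_of_complete hucauchy
  have hrd : Filter.Tendsto rs Filter.atTop (nhds d) := by
    have h2 : Filter.Tendsto (fun n : ℕ => d + 1/((n:ℝ)+1)) Filter.atTop (nhds d) := by
      have := tendsto_one_div_add_atTop_nhds_zero_nat.const_add d
      simpa using this
    exact tendsto_of_tendsto_of_tendsto_of_le_of_le tendsto_const_nhds h2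
      hrge (fun n => (hrp' n).le)
  -- pass to the limit in the feasibility constraints
  have hEbar : E xb ub d := by
    intro y v hv
    have hUinvx : Filter.Tendsto (fun n => Uinv (xs n)) Filter.atTop (nhds (Uinv xb)) :=
      (Uinv.continuous.tendsto xb).comp hxb
    have hUu : Filter.Tendsto (fun n => U (us n)) Filter.atTop (nhds (U ub)) :=
      (U.continuous.tendsto ub).comp hub
    have hlhs : Filter.Tendsto
        (fun n => ⟪us n, y⟫ + ⟪v, xs n⟫ - ⟪v, y⟫ + (⟪Uinv (xs n), xs n⟫ + ⟪U (us n), us n⟫)/2)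
        Filter.atTop
        (nhds (⟪ub, y⟫ + ⟪v, xb⟫ - ⟪v, y⟫ + (⟪Uinv xb, xb⟫ + ⟪U ub, ub⟫)/2)) := by
      exact (((hub.inner tendsto_const_nhds).add
        (Filter.Tendsto.inner tendsto_const_nhds hxb)).sub tendsto_const_nhds).add
        (((hUinvx.inner hxb).add (hUu.inner hub)).div_const 2)
    exact le_of_tendsto_of_tendsto' hlhs hrd (fun n => hEp n y v hv)
  set Fb : ℝ := d - (⟪Uinv xb, xb⟫ + ⟪U ub, ub⟫)/2 with hFb_def
  have hFb_ge : ⟪ub, xb⟫ ≤ Fb := by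
    have := hkey xb ub d hEbar
    rw [hFb_def]; linarith
  -- the variational inequality (★)
  have hstar : ∀ y v, v ∈ A y →
      Fb - ⟪Uinv xb, y - xb⟫ - ⟪U ub, v - ub⟫ ≤ ⟪y, v⟫ := by
    intro y v hv
    set Aq : ℝ := ⟪y, v⟫ - Fb + ⟪Uinv xb, y - xb⟫ + ⟪U ub, v - ub⟫ with hAq_def
    set Bq : ℝ := (⟪Uinv (y - xb), y - xb⟫ + ⟪U (v - ub), v - ub⟫)/2 with hBq_def
    have hBq0 : 0 ≤ Bq := by
      have := hbpos (y - xb); have := hUpos (v - ub); rw [hBq_def]; linarith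
    have hAt : ∀ t : ℝ, 0 < t → t ≤ 1 → 0 ≤ Aq + t * Bq := by
      intro t ht ht1
      set pt : H := xb + t • (y - xb) with hpt
      set qt : H := ub + t • (v - ub) with hqt
      have hmem : E pt qt ((1-t)*Fb + t*⟪y,v⟫ + (⟪Uinv pt, pt⟫ + ⟪U qt, qt⟫)/2) := by
        intro y' v' hv'
        have h1 := hEbar y' v' hv'
        -- affine value at (xb, ub) is ≤ Fb
        have haff1 : ⟪ub, y'⟫ + ⟪v', xb⟫ - ⟪v', y'⟫ ≤ Fb := by
          rw [hFb_def]; linarith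
        -- affine value at (y, v) is ≤ ⟪y,v⟫ by monotonicity
        have haff2 : ⟪v, y'⟫ + ⟪v', y⟫ - ⟪v', y'⟫ ≤ ⟪y, v⟫ := by
          have hm := hA.1 y y' v v' hv hv'
          simp only [inner_sub_left, inner_sub_right] at hm
          have e1 : ⟪v, y⟫ = ⟪y, v⟫ := real_inner_comm _ _
          have e2 : ⟪v, y'⟫ = ⟪y', v⟫ := real_inner_comm _ _
          linarith [real_inner_comm v' y]
        have e1 : ⟪qt, y'⟫ = ⟪ub, y'⟫ + t * (⟪v, y'⟫ - ⟪ub, y'⟫) := by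
          rw [hqt, inner_add_left, real_inner_smul_left, inner_sub_left]
        have e2 : ⟪v', pt⟫ = ⟪v', xb⟫ + t * (⟪v', y⟫ - ⟪v', xb⟫) := by
          rw [hpt, inner_add_right, real_inner_smul_right, inner_sub_right]
        rw [e1, e2]
        nlinarith [haff1, haff2, ht.le, ht1]
      have hin : (1-t)*Fb + t*⟪y,v⟫ + (⟪Uinv pt, pt⟫ + ⟪U qt, qt⟫)/2 ∈ S := ⟨_, _, hmem⟩
      have hge := csInf_le hSbdd hin
      have e3 := inner_expand_t Uinv hUinvsym xb (y - xb) t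
      have e4 := inner_expand_t U hUsym2 ub (v - ub) t
      rw [hpt, hqt, ← hd_def] at hge
      rw [e3, e4] at hge
      have hexp : 0 ≤ t * Aq + t^2 * Bq := by
        rw [hAq_def, hBq_def, hFb_def]
        rw [hFb_def] at hge
        nlinarith [hge]
      have := mul_pos ht ht
      nlinarith [hexp, ht]
    -- conclude Aq ≥ 0
    have hAq0 : 0 ≤ Aq := by
      by_contra hneg
      push_neg at hneg
      have hminpos : 0 < min 1 (-Aq/(Bq+1)) :=
        lt_min one_pos (div_pos (by linarith) (by linarith))
      have ht := hAt (min 1 (-Aq/(Bq+1))) hminpos (min_le_left _ _)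
      have hmin : min 1 (-Aq/(Bq+1)) ≤ -Aq/(Bq+1) := min_le_right _ _
      have ht0 : (-Aq/(Bq+1)) * (Bq+1) = -Aq := div_mul_cancel₀ _ (by linarith)
      nlinarith [mul_le_mul_of_nonneg_right hmin hBq0, ht0, ht, hminpos, hBq0]
    rw [hAq_def] at hAq0
    linarith
  -- monotone relatedness of the swapped-negated point
  have hrel : ∀ y v, v ∈ A y → (0:ℝ) ≤ ⟪(-(Uinv xb)) - v, (-(U ub)) - y⟫ := by
    intro y v hv
    have hs := hstar y v hv
    have hexp : ⟪(-(Uinv xb)) - v, (-(U ub)) - y⟫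
        = ⟪xb, ub⟫ + ⟪Uinv xb, y⟫ + ⟪U ub, v⟫ + ⟪y, v⟫ := by
      rw [show (-(Uinv xb)) - v = -(Uinv xb + v) by abel,
        show (-(U ub)) - y = -(U ub + y) by abel, inner_neg_neg]
      simp only [inner_add_left, inner_add_right]
      rw [hcross xb ub, real_inner_comm (U ub) v, real_inner_comm y v]
      ring
    rw [hexp]
    simp only [inner_sub_right] at hs
    have h2 := hsq xb ub
    have e : ⟪ub, xb⟫ = ⟪xb, ub⟫ := real_inner_comm _ _
    linarith [hFb_ge]
  have hmem' : (-(Uinv xb)) ∈ A (-(U ub)) := hA.2 _ _ hrel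
  -- plug the new graph point into (★) to get ‖xb + U ub‖ = 0
  have hzero : xb + U ub = 0 := by
    have hs := hstar _ _ hmem'
    simp only [inner_sub_right, inner_neg_left, inner_neg_right] at hs
    have e1 : ⟪Uinv xb, U ub⟫ = ⟪xb, ub⟫ := hcross _ _
    have e2 : ⟪U ub, Uinv xb⟫ = ⟪xb, ub⟫ :=
      (real_inner_comm (Uinv xb) (U ub)).trans (hcross xb ub)
    rw [e1, e2] at hs
    have hFb2 := hFb_ge
    have e4 : ⟪ub, xb⟫ = ⟪xb, ub⟫ := real_inner_comm _ _
    have h5 : ⟪Uinv xb, xb⟫ + 2*⟪xb, ub⟫ + ⟪U ub, ub⟫ ≤ 0 := by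
      rw [hFb_def] at hs hFb2
      linarith
    have h6 := hbcoer (xb + U ub)
    rw [hNexp] at h6
    have h7 : c * ‖xb + U ub‖^2 ≤ 0 := by
      rw [real_inner_comm xb ub] at h6
      linarith
    have h8 : ‖xb + U ub‖^2 = 0 := le_antisymm (by nlinarith) (by positivity)
    exact norm_eq_zero.mp (sq_eq_zero_iff.mp h8)
  refine ⟨-(U ub), -(Uinv xb), hmem', ?_⟩
  rw [map_neg, hUUinv, ← neg_add, add_comm, hzero, neg_zero]

lemma minty (α : ℝ) (hα : 0 < α)
    (U Uinv : H →L[ℝ] H) (hU : IsSelfAdjoint U)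
    (hUα : ∀ x : H, α * ‖x‖ ^ 2 ≤ ⟪U x, x⟫)
    (hinv₁ : U.comp Uinv = ContinuousLinearMap.id ℝ H)
    (hinv₂ : Uinv.comp U = ContinuousLinearMap.id ℝ H)
    (A : H → Set H) (hA : IsMaximallyMonotoneOp A) (z : H) :
    ∃ x u, u ∈ A x ∧ x + U u = z := by
  have hUUinv : ∀ a : H, U (Uinv a) = a := fun a => DFunLike.congr_fun hinv₁ a
  set w : H := Uinv z with hw
  set A' : H → Set H := fun y => {v | v + w ∈ A y} with hA'
  have hA'max : IsMaximallyMonotoneOp A' := by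
    constructor
    · intro x y u v hu hv
      have h := hA.1 x y (u + w) (v + w) hu hv
      have e : (u + w) - (v + w) = u - v := by abel
      rwa [e] at h
    · intro x u h
      have hmemA : u + w ∈ A x := by
        apply hA.2 x (u + w)
        intro y v hv
        have hv' : v - w ∈ A' y := by
          simp only [hA', Set.mem_setOf_eq, sub_add_cancel]
          exact hv
        have h2 := h y (v - w) hv'
        have e : u - (v - w) = (u + w) - v := by abel
        rwa [e] at h2
      exact hmemA
  obtain ⟨x, u, hu, hx⟩ := minty_zero α hα U Uinv hU hUα hinv₁ hinv₂ A' hA'max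
  refine ⟨x, u + w, hu, ?_⟩
  rw [map_add, hw, hUUinv, ← add_assoc, hx, zero_add]

lemma res_uniq (α : ℝ) (hα : 0 < α)
    (U : H →L[ℝ] H)
    (hUα : ∀ x : H, α * ‖x‖ ^ 2 ≤ ⟪U x, x⟫)
    (A : H → Set H) (hA : IsMaximallyMonotoneOp A)
    (y₁ u₁ y₂ u₂ : H) (h₁ : u₁ ∈ A y₁) (h₂ : u₂ ∈ A y₂)
    (he : y₁ + U u₁ = y₂ + U u₂) : y₁ = y₂ := by
  have hm := hA.1 y₁ y₂ u₁ u₂ h₁ h₂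
  have hy : y₁ - y₂ = -(U (u₁ - u₂)) := by
    rw [map_sub]
    have := congrArg (fun t => t - U u₁ - y₂) he
    rw [show y₁ + U u₁ - U u₁ - y₂ = y₁ - y₂ by abel,
      show y₂ + U u₂ - U u₁ - y₂ = U u₂ - U u₁ by abel] at this
    rw [this]; abel
  rw [hy, inner_neg_right] at hm
  have hc := hUα (u₁ - u₂)
  have e2 : ⟪u₁ - u₂, U (u₁ - u₂)⟫ = ⟪U (u₁ - u₂), u₁ - u₂⟫ := real_inner_comm _ _
  rw [e2] at hm
  have h8 : ‖u₁ - u₂‖^2 = 0 := le_antisymm (by nlinarith) (by positivity)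
  have h9 : u₁ = u₂ := sub_eq_zero.mp (norm_eq_zero.mp (sq_eq_zero_iff.mp h8))
  rw [h9] at he
  exact add_right_cancel he

end Minty

theorem stmt_12 {H : Type*} [NormedAddCommGroup H] [InnerProductSpace ℝ H] [CompleteSpace H]
    (α : ℝ) (hα : 0 < α)
    (U Uinv : H →L[ℝ] H) (hU : IsSelfAdjoint U)
    (hUα : ∀ x : H, α * ‖x‖ ^ 2 ≤ ⟪U x, x⟫)
    (hinv₁ : U.comp Uinv = ContinuousLinearMap.id ℝ H)
    (hinv₂ : Uinv.comp U = ContinuousLinearMap.id ℝ H)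
    (A : H → Set H) (hA : IsMaximallyMonotoneOp A) :
    ∃ J : H → H,
      (∀ x y : H, y = J x ↔ ∃ u ∈ A y, x = y + U u) ∧
      ∀ x y : H,
        ⟪Uinv (J x - J y), J x - J y⟫ ≤
          ⟪Uinv (x - y), x - y⟫ -
            ⟪Uinv ((x - J x) - (y - J y)), (x - J x) - (y - J y)⟫ := by
  have hUUinv : ∀ a : H, U (Uinv a) = a := fun a => DFunLike.congr_fun hinv₁ a
  have hUinvU : ∀ a : H, Uinv (U a) = a := fun a => DFunLike.congr_fun hinv₂ a
  have hUsym : ∀ a b : H, ⟪U a, b⟫ = ⟪a, U b⟫ := fun a b => hU.isSymmetric a b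
  have hcross : ∀ a b : H, ⟪Uinv a, U b⟫ = ⟪a, b⟫ := fun a b => by
    rw [← hUsym, hUUinv]
  have hcross2 : ∀ a b : H, ⟪Uinv (U a), b⟫ = ⟪a, b⟫ := fun a b => by rw [hUinvU]
  have hNexp : ∀ x u : H, ⟪Uinv (x + U u), x + U u⟫
      = ⟪Uinv x, x⟫ + 2*⟪u, x⟫ + ⟪U u, u⟫ := by
    intro x u
    rw [map_add]
    simp only [inner_add_left, inner_add_right]
    rw [hcross, hcross2, hcross2, real_inner_comm x u, real_inner_comm (U u) u]
    ring
  have hex : ∀ z : H, ∃ q : H × H, q.2 ∈ A q.1 ∧ q.1 + U q.2 = z := by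
    intro z
    obtain ⟨x, u, hu, hx⟩ := minty α hα U Uinv hU hUα hinv₁ hinv₂ A hA z
    exact ⟨⟨x, u⟩, hu, hx⟩
  choose q hqmem hqeq using hex
  set J : H → H := fun z => (q z).1 with hJ
  set uJ : H → H := fun z => (q z).2 with huJ
  have hmem : ∀ z, uJ z ∈ A (J z) := fun z => hqmem z
  have heq : ∀ z, J z + U (uJ z) = z := fun z => hqeq z
  refine ⟨J, ?_, ?_⟩
  · intro x y
    constructor
    · rintro rfl
      exact ⟨uJ x, hmem x, (heq x).symm⟩
    · rintro ⟨u, hu, hxe⟩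
      exact res_uniq α hα U hUα A hA y u (J x) (uJ x) hu (hmem x)
        (hxe.symm.trans (heq x).symm)
  · intro x y
    have hxp : x - J x = U (uJ x) := (eq_sub_of_add_eq' (heq x)).symm
    have hyq : y - J y = U (uJ y) := (eq_sub_of_add_eq' (heq y)).symm
    have hsum : x - y = (J x - J y) + U (uJ x - uJ y) := by
      rw [map_sub, ← hxp, ← hyq]
      abel
    have hdiff : (x - J x) - (y - J y) = U (uJ x - uJ y) := by
      rw [hxp, hyq, map_sub]
    rw [hsum, hdiff, hNexp]
    have hmono := hA.1 (J x) (J y) (uJ x) (uJ y) (hmem x) (hmem y)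
    have hlast : ⟪Uinv (U (uJ x - uJ y)), U (uJ x - uJ y)⟫ = ⟪U (uJ x - uJ y), uJ x - uJ y⟫ := by
      rw [hcross2]
      exact real_inner_comm _ _
    rw [hlast]
    linarith
end

section
/- Let H be a real Hilbert space, let α, μ > 0, and let (W_n) be a sequence of bounded self-adjoint operators with W_n ≽ α·Id and ‖W_n‖ ≤ μ for all n. Suppose there is a summable sequence (η_n) of nonnegative reals with (1+η_n)·W_n ≽ W_{n+1} for all n. Then the sequence (W_n) converges pointwise (strongly) to some bounded self-adjoint operator W with W ≽ α·Id. -/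
/-!
Dividing `W n` by `P n = ∏ k < n, (1 + η k)` turns the approximate monotonicity into Loewner
monotonicity: `V n = (P n)⁻¹ • W n` is a decreasing sequence of positive operators of norm at
most `μ`. Such a sequence converges strongly (Vigier): the quadratic forms `⟪V n x, x⟫` decrease
to a limit, and `‖(V n - V m) x‖ ^ 2 ≤ ‖V n - V m‖ * ⟪(V n - V m) x, x⟫` makes `V n x` Cauchy.
Since `η` is summable, `P n` converges, hence so does `W n x = P n • V n x`. The pointwise limit
is a bounded operator by Banach–Steinhaus, and self-adjointness and the lower bound `α` pass to
the limit.
-/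

open RealInnerProductSpace Filter Topology Finset

namespace ContinuousLinearMap

variable {H : Type*} [NormedAddCommGroup H] [InnerProductSpace ℝ H]

/-- Cauchy–Schwarz for the semi-inner product `⟪A ·, ·⟫`: the quadratic
`t ↦ ⟪A (u + t • v), u + t • v⟫` is nonnegative, so its discriminant is nonpositive. -/
theorem IsPositive.inner_apply_sq_le {A : H →L[ℝ] H} (hA : A.IsPositive) (u v : H) :
    ⟪A u, v⟫ ^ 2 ≤ ⟪A u, u⟫ * ⟪A v, v⟫ := by
  have hvu : ⟪A v, u⟫ = ⟪A u, v⟫ := by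
    rw [hA.inner_left_eq_inner_right, real_inner_comm]
  have hquad : ∀ t : ℝ, 0 ≤ ⟪A v, v⟫ * (t * t) + 2 * ⟪A u, v⟫ * t + ⟪A u, u⟫ := by
    intro t
    have h := hA.inner_nonneg_left (u + t • v)
    simp only [map_add, map_smul, inner_add_left, inner_add_right, real_inner_smul_left,
      real_inner_smul_right, hvu] at h
    linarith
  have hd := discrim_le_zero hquad
  rw [discrim] at hd
  linarith

theorem IsPositive.norm_apply_sq_le {A : H →L[ℝ] H} (hA : A.IsPositive) (x : H) :
    ‖A x‖ ^ 2 ≤ ‖A‖ * ⟪A x, x⟫ := by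
  rcases eq_or_ne (A x) 0 with hAx | hAx
  · simp [hAx]
  have hpos : 0 < ‖A x‖ ^ 2 := by positivity
  have hAAx : ⟪A (A x), A x⟫ ≤ ‖A‖ * ‖A x‖ ^ 2 :=
    calc ⟪A (A x), A x⟫ ≤ ‖A (A x)‖ * ‖A x‖ := real_inner_le_norm _ _
      _ ≤ ‖A‖ * ‖A x‖ * ‖A x‖ := by gcongr; exact A.le_opNorm _
      _ = ‖A‖ * ‖A x‖ ^ 2 := by ring
  have h := hA.inner_apply_sq_le x (A x)
  rw [real_inner_self_eq_norm_sq] at h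
  have : ‖A x‖ ^ 2 * ‖A x‖ ^ 2 ≤ ‖A x‖ ^ 2 * (‖A‖ * ⟪A x, x⟫) := by
    nlinarith [mul_le_mul_of_nonneg_left hAAx (hA.inner_nonneg_left x)]
  exact le_of_mul_le_mul_left this hpos

/-- Vigier's theorem, in Cauchy form. -/
theorem cauchySeq_apply_of_antitone {V : ℕ → H →L[ℝ] H} (hV : Antitone V) (hV0 : ∀ n, 0 ≤ V n)
    {C : ℝ} (hC : ∀ n, ‖V n‖ ≤ C) (x : H) : CauchySeq fun n ↦ V n x := by
  have hdiff : ∀ {n m}, n ≤ m → (V n - V m).IsPositive := fun hnm ↦ (le_def _ _).1 (hV hnm)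
  set q : ℕ → ℝ := fun n ↦ ⟪V n x, x⟫
  have hq : Antitone q := fun n m hnm ↦ by
    simpa [q, inner_sub_left] using (hdiff hnm).inner_nonneg_left x
  have hbdd : BddBelow (Set.range q) :=
    ⟨0, Set.forall_mem_range.2 fun n ↦ ((nonneg_iff_isPositive _).1 (hV0 n)).inner_nonneg_left x⟩
  set L := ⨅ n, q n
  have hqL : Tendsto q atTop (𝓝 L) := tendsto_atTop_ciInf hq hbdd
  have hC0 : 0 ≤ C := (norm_nonneg _).trans (hC 0)
  refine cauchySeq_of_le_tendsto_0' (fun n ↦ √(2 * C * (q n - L))) (fun n m hnm ↦ ?_) ?_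
  · have hnorm : ‖V n - V m‖ ≤ 2 * C := by
      linarith [norm_sub_le (V n) (V m), hC n, hC m]
    have hsq : dist (V n x) (V m x) ^ 2 ≤ 2 * C * (q n - L) :=
      calc dist (V n x) (V m x) ^ 2 = ‖(V n - V m) x‖ ^ 2 := by rw [dist_eq_norm, sub_apply]
        _ ≤ ‖V n - V m‖ * ⟪(V n - V m) x, x⟫ := (hdiff hnm).norm_apply_sq_le x
        _ ≤ 2 * C * (q n - L) := by
          rw [sub_apply, inner_sub_left]
          gcongr
          · simpa [inner_sub_left] using (hdiff hnm).inner_nonneg_left x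
          · exact ciInf_le hbdd m
    exact Real.le_sqrt_of_sq_le hsq
  · simpa using ((hqL.sub_const L).const_mul (2 * C)).sqrt

theorem antitone_inv_prod_smul {W : ℕ → H →L[ℝ] H} {η : ℕ → ℝ} (hη0 : ∀ n, 0 ≤ η n)
    (hmon : ∀ n, W (n + 1) ≤ (1 + η n) • W n) :
    Antitone fun n ↦ (∏ k ∈ range n, (1 + η k))⁻¹ • W n := by
  refine antitone_nat_of_succ_le fun n ↦ ?_
  set P := ∏ k ∈ range n, (1 + η k)
  have hP : 0 < P := prod_pos fun k _ ↦ by linarith [hη0 k]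
  have hη : 0 < 1 + η n := by linarith [hη0 n]
  have hscalar : (P * (1 + η n))⁻¹ * (1 + η n) = P⁻¹ := by field_simp
  rw [le_def, prod_range_succ, ← hscalar, ← smul_smul, ← smul_sub]
  exact (hmon n).smul_of_nonneg (by positivity)

variable [CompleteSpace H]

theorem le_iff_forall_inner_apply_le {f g : H →L[ℝ] H} (hf : IsSelfAdjoint f)
    (hg : IsSelfAdjoint g) : f ≤ g ↔ ∀ x, ⟪f x, x⟫ ≤ ⟪g x, x⟫ := by
  simp only [le_def, isPositive_iff', hg.sub hf, true_and, sub_apply, inner_sub_left, sub_nonneg]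

theorem isSelfAdjoint_of_tendsto_apply {ι : Type*} {l : Filter ι} [l.NeBot] {W : ι → H →L[ℝ] H}
    {T : H →L[ℝ] H} (hW : ∀ i, IsSelfAdjoint (W i))
    (hT : ∀ x, Tendsto (fun i ↦ W i x) l (𝓝 (T x))) : IsSelfAdjoint T := by
  refine isSelfAdjoint_iff_isSymmetric.2 fun u v ↦
    tendsto_nhds_unique ?_ ((tendsto_const_nhds (x := u)).inner (𝕜 := ℝ) (hT v))
  exact ((hT u).inner (𝕜 := ℝ) tendsto_const_nhds).congr fun i ↦
    isSelfAdjoint_iff_isSymmetric.1 (hW i) u v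

end ContinuousLinearMap

open ContinuousLinearMap in
theorem stmt_14_general {H : Type*} [NormedAddCommGroup H] [InnerProductSpace ℝ H] [CompleteSpace H]
    (α μ : ℝ) (hα : 0 < α)
    (W : ℕ → H →L[ℝ] H) (hW : ∀ n, IsSelfAdjoint (W n))
    (hWα : ∀ n, ∀ x : H, α * ‖x‖ ^ 2 ≤ ⟪W n x, x⟫)
    (hWμ : ∀ n, ‖W n‖ ≤ μ)
    (η : ℕ → ℝ) (hη0 : ∀ n, 0 ≤ η n) (hη : Summable η)
    (hmon : ∀ n, ∀ x : H, ⟪W (n + 1) x, x⟫ ≤ (1 + η n) * ⟪W n x, x⟫) :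
    ∃ Wlim : H →L[ℝ] H, IsSelfAdjoint Wlim ∧
      (∀ x : H, α * ‖x‖ ^ 2 ≤ ⟪Wlim x, x⟫) ∧
      ∀ x : H, Filter.Tendsto (fun n => W n x) Filter.atTop (nhds (Wlim x)) := by
  set P : ℕ → ℝ := fun n ↦ ∏ k ∈ range n, (1 + η k)
  have hP1 : ∀ n, 1 ≤ P n := fun n ↦ Finset.one_le_prod fun k _ ↦ by linarith [hη0 k]
  obtain ⟨p, hPp⟩ : ∃ p, Tendsto P atTop (𝓝 p) :=
    ⟨_, (Real.multipliable_one_add_of_summable hη).hasProd.tendsto_prod_nat⟩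
  set V : ℕ → H →L[ℝ] H := fun n ↦ (P n)⁻¹ • W n
  have hW0 : ∀ n, 0 ≤ W n := fun n ↦ (le_iff_forall_inner_apply_le (.zero _) (hW n)).2 fun x ↦ by
    simpa using (by positivity : 0 ≤ α * ‖x‖ ^ 2).trans (hWα n x)
  have hV : Antitone V := antitone_inv_prod_smul hη0 fun n ↦
    (le_iff_forall_inner_apply_le (hW _) ((IsSelfAdjoint.all (1 + η n)).smul (hW n))).2 fun x ↦ by
      simpa [real_inner_smul_left] using hmon n x
  have hV0 : ∀ n, 0 ≤ V n := fun n ↦ (nonneg_iff_isPositive _).2 <|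
    ((nonneg_iff_isPositive _).1 (hW0 n)).smul_of_nonneg (inv_nonneg.2 (by linarith [hP1 n]))
  have hVμ : ∀ n, ‖V n‖ ≤ μ := fun n ↦ by
    rw [norm_smul, norm_inv, Real.norm_of_nonneg (by linarith [hP1 n])]
    exact (mul_le_of_le_one_left (norm_nonneg _) (inv_le_one_of_one_le₀ (hP1 n))).trans (hWμ n)
  have hlim : ∀ x, ∃ y, Tendsto (fun n ↦ W n x) atTop (𝓝 y) := fun x ↦ by
    obtain ⟨v, hv⟩ := cauchySeq_tendsto_of_complete (cauchySeq_apply_of_antitone hV hV0 hVμ x)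
    refine ⟨p • v, (hPp.smul hv).congr fun n ↦ ?_⟩
    simp [V, smul_smul, mul_inv_cancel₀ (by linarith [hP1 n] : P n ≠ 0)]
  choose w hw using hlim
  let Wlim := continuousLinearMapOfTendsto W (tendsto_pi_nhds.2 hw)
  refine ⟨Wlim, isSelfAdjoint_of_tendsto_apply hW hw, fun x ↦ ?_, hw⟩
  exact ge_of_tendsto' ((hw x).inner (𝕜 := ℝ) tendsto_const_nhds) (hWα · x)

theorem stmt_14 {H : Type*} [NormedAddCommGroup H] [InnerProductSpace ℝ H] [CompleteSpace H]
    (α μ : ℝ) (hα : 0 < α) (hμ : 0 < μ)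
    (W : ℕ → H →L[ℝ] H) (hW : ∀ n, IsSelfAdjoint (W n))
    (hWα : ∀ n, ∀ x : H, α * ‖x‖ ^ 2 ≤ ⟪W n x, x⟫)
    (hWμ : ∀ n, ‖W n‖ ≤ μ)
    (η : ℕ → ℝ) (hη0 : ∀ n, 0 ≤ η n) (hη : Summable η)
    (hmon : ∀ n, ∀ x : H, ⟪W (n + 1) x, x⟫ ≤ (1 + η n) * ⟪W n x, x⟫) :
    ∃ Wlim : H →L[ℝ] H, IsSelfAdjoint Wlim ∧
      (∀ x : H, α * ‖x‖ ^ 2 ≤ ⟪Wlim x, x⟫) ∧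
      ∀ x : H, Filter.Tendsto (fun n => W n x) Filter.atTop (nhds (Wlim x)) :=
  stmt_14_general α μ hα W hW hWα hWμ η hη0 hη hmon
end

section
/- Let H be a real Hilbert space, let α > 0, let (W_n) be a sequence of bounded self-adjoint operators with W_n ≽ α·Id and sup_n ‖W_n‖ < ∞, let C be a nonempty subset of H, and let (x_n) be a sequence in H such that there exist summable nonnegative sequences (η_n) and, for each z ∈ C, (ε_n), with ‖x_{n+1} − z‖²_{W_{n+1}} ≤ (1+η_n)‖x_n − z‖²_{W_n} + ε_n for all n. Then (x_n) is bounded and, for every z ∈ C, the sequence (‖x_n − z‖_{W_n}) converges. -/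
/-!
Dividing by the partial products `P n = ∏ k < n, (1 + η k)`, which converge because `η` is
summable, turns the quasi-Fejér inequality into `u (n + 1) ≤ u n + δ n` with `δ` summable; then
`u n - ∑ k < n, δ k` is nonincreasing and bounded below, hence convergent. Convergence of
`‖x n - z‖²_{W n}` bounds `‖x n - z‖` through `W n ≽ α • 1`.
-/

open Filter Finset Topology

theorem exists_tendsto_of_le_add_of_summable {u δ : ℕ → ℝ} (hu : BddBelow (Set.range u))
    (hδ : ∀ n, 0 ≤ δ n) (hδs : Summable δ) (h : ∀ n, u (n + 1) ≤ u n + δ n) :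
    ∃ l, Tendsto u atTop (𝓝 l) := by
  obtain ⟨m, hm⟩ := hu
  set S : ℕ → ℝ := fun n => ∑ k ∈ range n, δ k
  have hS_le : ∀ n, S n ≤ ∑' k, δ k := fun n => hδs.sum_le_tsum _ fun k _ => hδ k
  have hanti : Antitone (u - S) := antitone_nat_of_succ_le fun n => by
    simp only [Pi.sub_apply, S, sum_range_succ]
    linarith [h n]
  have hbdd : BddBelow (Set.range (u - S)) := ⟨m - ∑' k, δ k, by
    rintro _ ⟨n, rfl⟩
    linarith [hm ⟨n, rfl⟩, hS_le n, show (u - S) n = u n - S n from rfl]⟩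
  exact ⟨_, ((tendsto_atTop_ciInf hanti hbdd).add hδs.hasSum.tendsto_sum_nat).congr fun n =>
    sub_add_cancel _ _⟩

theorem exists_tendsto_of_le_one_add_mul_add {a η ε : ℕ → ℝ} (ha : ∀ n, 0 ≤ a n)
    (hη : ∀ n, 0 ≤ η n) (hηs : Summable η) (hε : ∀ n, 0 ≤ ε n) (hεs : Summable ε)
    (h : ∀ n, a (n + 1) ≤ (1 + η n) * a n + ε n) :
    ∃ l, Tendsto a atTop (𝓝 l) := by
  set P : ℕ → ℝ := fun n => ∏ k ∈ range n, (1 + η k)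
  have hP_one_le : ∀ n, 1 ≤ P n := fun n => one_le_prod fun k _ => by linarith [hη k]
  have hP_pos : ∀ n, 0 < P n := fun n => one_pos.trans_le (hP_one_le n)
  have hδ : ∀ n, 0 ≤ ε n / P (n + 1) := fun n => div_nonneg (hε n) (hP_pos _).le
  have hδs : Summable fun n => ε n / P (n + 1) := hεs.of_nonneg_of_le hδ fun n =>
    div_le_self (hε n) (hP_one_le _)
  have hstep : ∀ n, a (n + 1) / P (n + 1) ≤ a n / P n + ε n / P (n + 1) := fun n => by
    have hP_succ : P (n + 1) = P n * (1 + η n) := prod_range_succ _ _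
    have ha_div : a n / P n = (1 + η n) * a n / P (n + 1) := by
      rw [hP_succ, mul_comm (1 + η n), mul_div_mul_right _ _ (by linarith [hη n])]
    rw [ha_div, ← add_div, div_le_div_iff_of_pos_right (hP_pos _)]
    exact h n
  have hbdd : BddBelow (Set.range fun n => a n / P n) :=
    ⟨0, by rintro _ ⟨n, rfl⟩; exact div_nonneg (ha n) (hP_pos n).le⟩
  obtain ⟨l, hl⟩ := exists_tendsto_of_le_add_of_summable hbdd hδ hδs hstep
  have hP_lim : Tendsto P atTop (𝓝 (∏' k, (1 + η k))) :=
    (Real.multipliable_one_add_of_summable hηs).hasProd.tendsto_prod_nat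
  exact ⟨_, (hl.mul hP_lim).congr fun n => div_mul_cancel₀ _ (hP_pos n).ne'⟩

open RealInnerProductSpace

theorem stmt_15_general {H : Type*} [NormedAddCommGroup H] [InnerProductSpace ℝ H]
    (α : ℝ) (hα : 0 < α)
    (W : ℕ → H →L[ℝ] H)
    (hWα : ∀ n, ∀ x : H, α * ‖x‖ ^ 2 ≤ ⟪W n x, x⟫)
    (C : Set H) (hC : C.Nonempty)
    (x : ℕ → H)
    (hfejer : ∃ η : ℕ → ℝ, (∀ n, 0 ≤ η n) ∧ Summable η ∧
      ∀ z ∈ C, ∃ ε : ℕ → ℝ, (∀ n, 0 ≤ ε n) ∧ Summable ε ∧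
        ∀ n, ⟪W (n + 1) (x (n + 1) - z), x (n + 1) - z⟫ ≤
          (1 + η n) * ⟪W n (x n - z), x n - z⟫ + ε n) :
    (∃ M : ℝ, ∀ n, ‖x n‖ ≤ M) ∧
    ∀ z ∈ C, ∃ l : ℝ,
      Filter.Tendsto (fun n => Real.sqrt ⟪W n (x n - z), x n - z⟫) Filter.atTop (nhds l) := by
  obtain ⟨η, hη, hηs, hrec⟩ := hfejer
  have hconv : ∀ z ∈ C, ∃ l, Tendsto (fun n => ⟪W n (x n - z), x n - z⟫) atTop (𝓝 l) := by
    intro z hz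
    obtain ⟨ε, hε, hεs, hz_rec⟩ := hrec z hz
    exact exists_tendsto_of_le_one_add_mul_add
      (fun n => (by positivity : 0 ≤ α * ‖x n - z‖ ^ 2).trans (hWα n _)) hη hηs hε hεs hz_rec
  constructor
  · obtain ⟨z, hz⟩ := hC
    obtain ⟨l, hl⟩ := hconv z hz
    obtain ⟨M, hM⟩ := hl.bddAbove_range
    refine ⟨Real.sqrt (M / α) + ‖z‖, fun n => ?_⟩
    have hdist : ‖x n - z‖ ≤ Real.sqrt (M / α) := Real.le_sqrt_of_sq_le <| by
      rw [le_div_iff₀ hα, mul_comm]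
      exact (hWα n _).trans (hM ⟨n, rfl⟩)
    calc ‖x n‖ = ‖(x n - z) + z‖ := by rw [sub_add_cancel]
      _ ≤ ‖x n - z‖ + ‖z‖ := norm_add_le _ _
      _ ≤ Real.sqrt (M / α) + ‖z‖ := by gcongr
  · intro z hz
    obtain ⟨l, hl⟩ := hconv z hz
    exact ⟨Real.sqrt l, (Real.continuous_sqrt.tendsto l).comp hl⟩

theorem stmt_15 {H : Type*} [NormedAddCommGroup H] [InnerProductSpace ℝ H] [CompleteSpace H]
    (α : ℝ) (hα : 0 < α)
    (W : ℕ → H →L[ℝ] H) (hW : ∀ n, IsSelfAdjoint (W n))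
    (hWα : ∀ n, ∀ x : H, α * ‖x‖ ^ 2 ≤ ⟪W n x, x⟫)
    (hWbdd : ∃ μ : ℝ, ∀ n, ‖W n‖ ≤ μ)
    (C : Set H) (hC : C.Nonempty)
    (x : ℕ → H)
    (hfejer : ∃ η : ℕ → ℝ, (∀ n, 0 ≤ η n) ∧ Summable η ∧
      ∀ z ∈ C, ∃ ε : ℕ → ℝ, (∀ n, 0 ≤ ε n) ∧ Summable ε ∧
        ∀ n, ⟪W (n + 1) (x (n + 1) - z), x (n + 1) - z⟫ ≤
          (1 + η n) * ⟪W n (x n - z), x n - z⟫ + ε n) :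
    (∃ M : ℝ, ∀ n, ‖x n‖ ≤ M) ∧
    ∀ z ∈ C, ∃ l : ℝ,
      Filter.Tendsto (fun n => Real.sqrt ⟪W n (x n - z), x n - z⟫) Filter.atTop (nhds l) :=
  stmt_15_general α hα W hWα C hC x hfejer
end

section
/- Let H be a real Hilbert space, let α > 0, let (W_n) be bounded self-adjoint operators with W_n ≽ α·Id and sup_n‖W_n‖ < ∞, let C be a nonempty closed subset of H, and let (x_n) be a sequence in H satisfying the variable-metric quasi-Fejér condition: there exist summable nonnegative sequences (ε_n), (η_n) such that for all z ∈ C and all n, ‖x_{n+1} − z‖²_{W_{n+1}} ≤ (1+η_n)‖x_n − z‖²_{W_n} + ε_n. Then (x_n) converges strongly to a point in C if and only if liminf_n d_C(x_n) = 0. -/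
/-!
For `z ∈ C` the quantities `⟪W n (x n - z), x n - z⟫` obey the recursion of the discrete Grönwall
inequality, so `‖x m - z‖ ≤ A ‖x n - z‖ + e n` for all `m ≥ n`, with `A` fixed and `e n → 0`
(the tail of `ε`) coming from `α`, `sup ‖W n‖` and `exp (∑ η)`. If `d_C (x n)` is frequently
small, then picking `n` with both `e n` and `‖x n - z‖` small for some `z ∈ C` traps the whole tail
of the sequence near `z`, so `(x n)` is Cauchy; its limit has `d_C = 0` and lies in the closed
set `C`.
-/

open Filter Topology Metric Finset

open RealInnerProductSpace

theorem le_add_tsum_mul_exp_tsum {u b c : ℕ → ℝ} (hu0 : ∀ n, 0 ≤ u n)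
    (hu : ∀ n, u (n + 1) ≤ (1 + c n) * u n + b n) (hc : ∀ n, 0 ≤ c n) (hcs : Summable c)
    (hb : ∀ n, 0 ≤ b n) (hbs : Summable b) {n m : ℕ} (hnm : n ≤ m) :
    u m ≤ (u n + ∑' k, b (k + n)) * Real.exp (∑' i, c i) := by
  refine (discrete_gronwall (hu0 n) (fun k _ ↦ hu k) (fun k _ ↦ hc k) (fun k _ ↦ hb k) hnm).trans ?_
  have hb_tail : ∑ k ∈ Ico n m, b k ≤ ∑' k, b (k + n) := by
    rw [sum_Ico_eq_sum_range]
    simp_rw [add_comm n]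
    exact ((summable_nat_add_iff n).mpr hbs).sum_le_tsum _ fun k _ ↦ hb _
  gcongr
  · exact add_nonneg (hu0 n) (tsum_nonneg fun k ↦ hb _)
  · exact hcs.sum_le_tsum _ fun i _ ↦ hc i

theorem le_sqrt_mul_add_sqrt_of_sq_le {d d' A B : ℝ} (hd' : 0 ≤ d') (hA : 0 ≤ A) (hB : 0 ≤ B)
    (h : d ^ 2 ≤ A * d' ^ 2 + B) : d ≤ √A * d' + √B := by
  refine le_of_sq_le_sq ?_ (by positivity)
  nlinarith [Real.sq_sqrt hA, Real.sq_sqrt hB, Real.sqrt_nonneg A, Real.sqrt_nonneg B,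
    mul_nonneg (mul_nonneg (Real.sqrt_nonneg A) (Real.sqrt_nonneg B)) hd']

section MetricSpace

variable {X : Type*} [PseudoMetricSpace X] {C : Set X} {x : ℕ → X} {A : ℝ} {e : ℕ → ℝ}

theorem liminf_infDist_eq_zero_of_tendsto {ι : Type*} {l : Filter ι} [l.NeBot] {y : ι → X}
    {p : X} (hp : p ∈ C) (hy : Tendsto y l (𝓝 p)) :
    liminf (fun i ↦ infDist (y i) C) l = 0 :=
  ((continuous_infDist_pt C).tendsto p |>.comp hy).liminf_eq.trans (infDist_zero_of_mem hp)

theorem cauchySeq_of_dist_le_mul_add (hC : C.Nonempty) (he : Tendsto e atTop (𝓝 0))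
    (hle : ∀ z ∈ C, ∀ n m, n ≤ m → dist (x m) z ≤ A * dist (x n) z + e n)
    (hfreq : ∀ δ > 0, ∃ᶠ n in atTop, infDist (x n) C < δ) : CauchySeq x := by
  rw [Metric.cauchySeq_iff']
  intro δ hδ
  set r := δ / (4 * (|A| + 1)) with hr
  have hr0 : 0 < r := by positivity
  have hAr : |A| * r < δ / 4 := by
    rw [hr, ← mul_div_assoc, div_lt_div_iff₀ (by positivity) (by norm_num)]
    nlinarith [abs_nonneg A]
  obtain ⟨N, hdN, heN⟩ :=
    ((hfreq r hr0).and_eventually (he.eventually (gt_mem_nhds (by positivity : 0 < δ / 4)))).exists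
  obtain ⟨z, hzC, hz⟩ := (infDist_lt_iff hC).mp hdN
  have hclose : ∀ m ≥ N, dist (x m) z < δ / 2 := fun m hm ↦ calc
    dist (x m) z ≤ A * dist (x N) z + e N := hle z hzC N m hm
    _ ≤ |A| * r + e N := by gcongr; exact le_abs_self A
    _ < δ / 2 := by linarith
  refine ⟨N, fun m hm ↦ ?_⟩
  calc dist (x m) (x N) ≤ dist (x m) z + dist (x N) z := dist_triangle_right _ _ _
    _ < δ := by linarith [hclose m hm, hclose N le_rfl]

theorem exists_tendsto_mem_of_liminf_infDist_eq_zero [CompleteSpace X] (hCcl : IsClosed C)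
    (hC : C.Nonempty) (he : Tendsto e atTop (𝓝 0))
    (hle : ∀ z ∈ C, ∀ n m, n ≤ m → dist (x m) z ≤ A * dist (x n) z + e n)
    (hlim : liminf (fun n ↦ infDist (x n) C) atTop = 0) : ∃ p ∈ C, Tendsto x atTop (𝓝 p) := by
  obtain ⟨z₀, hz₀⟩ := hC
  -- Without an upper bound the real `liminf` would be the junk value `0`.
  have hbdd : ∀ n, infDist (x n) C ≤ A * dist (x 0) z₀ + e 0 := fun n ↦
    (infDist_le_dist_of_mem hz₀).trans (hle z₀ hz₀ 0 n n.zero_le)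
  have hfreq : ∀ δ > 0, ∃ᶠ n in atTop, infDist (x n) C < δ := fun δ hδ ↦
    frequently_lt_of_liminf_lt (isCoboundedUnder_ge_of_le _ hbdd) (hlim ▸ hδ)
  obtain ⟨p, hp⟩ :=
    cauchySeq_tendsto_of_complete (cauchySeq_of_dist_le_mul_add ⟨z₀, hz₀⟩ he hle hfreq)
  refine ⟨p, (hCcl.mem_iff_infDist_zero ⟨z₀, hz₀⟩).mpr ?_, hp⟩
  exact (((continuous_infDist_pt C).tendsto p).comp hp).liminf_eq.symm.trans hlim

end MetricSpace

section VariableMetric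

variable {H : Type*} [NormedAddCommGroup H] [InnerProductSpace ℝ H] {α μ : ℝ}
  {W : ℕ → H →L[ℝ] H} {x : ℕ → H} {z : H} {ε η : ℕ → ℝ}

theorem norm_sub_le_of_quasiFejer (hα : 0 < α) (hWα : ∀ n, ∀ x : H, α * ‖x‖ ^ 2 ≤ ⟪W n x, x⟫)
    (hμ : ∀ n, ‖W n‖ ≤ μ) (hε : ∀ n, 0 ≤ ε n) (hεs : Summable ε) (hη : ∀ n, 0 ≤ η n)
    (hηs : Summable η) (hz : ∀ n, ⟪W (n + 1) (x (n + 1) - z), x (n + 1) - z⟫ ≤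
        (1 + η n) * ⟪W n (x n - z), x n - z⟫ + ε n) {n m : ℕ} (hnm : n ≤ m) :
    ‖x m - z‖ ≤ √(μ * Real.exp (∑' i, η i) / α) * ‖x n - z‖ +
      √(Real.exp (∑' i, η i) / α * ∑' k, ε (k + n)) := by
  set Θ := Real.exp (∑' i, η i)
  have hΘ : 0 < Θ := Real.exp_pos _
  have hμ0 : 0 ≤ μ := (norm_nonneg _).trans (hμ 0)
  have hE : 0 ≤ ∑' k, ε (k + n) := tsum_nonneg fun k ↦ hε _
  have hform_le : ⟪W n (x n - z), x n - z⟫ ≤ μ * ‖x n - z‖ ^ 2 := calc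
    _ ≤ ‖W n (x n - z)‖ * ‖x n - z‖ := real_inner_le_norm _ _
    _ ≤ μ * ‖x n - z‖ * ‖x n - z‖ := by gcongr; exact (W n).le_of_opNorm_le (hμ n) _
    _ = μ * ‖x n - z‖ ^ 2 := by ring
  have hsq :
      α * ‖x m - z‖ ^ 2 ≤ α * (μ * Θ / α * ‖x n - z‖ ^ 2 + Θ / α * ∑' k, ε (k + n)) := calc
    α * ‖x m - z‖ ^ 2 ≤ ⟪W m (x m - z), x m - z⟫ := hWα m _
    _ ≤ (⟪W n (x n - z), x n - z⟫ + ∑' k, ε (k + n)) * Θ :=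
      le_add_tsum_mul_exp_tsum (fun k ↦ (by positivity : 0 ≤ α * ‖x k - z‖ ^ 2).trans (hWα k _))
        hz hη hηs hε hεs hnm
    _ ≤ (μ * ‖x n - z‖ ^ 2 + ∑' k, ε (k + n)) * Θ := by gcongr
    _ = α * (μ * Θ / α * ‖x n - z‖ ^ 2 + Θ / α * ∑' k, ε (k + n)) := by field_simp
  exact le_sqrt_mul_add_sqrt_of_sq_le (norm_nonneg _) (by positivity) (by positivity)
    (le_of_mul_le_mul_left hsq hα)

end VariableMetric

theorem stmt_16_general {H : Type*} [NormedAddCommGroup H] [InnerProductSpace ℝ H] [CompleteSpace H]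
    (α : ℝ) (hα : 0 < α)
    (W : ℕ → H →L[ℝ] H)
    (hWα : ∀ n, ∀ x : H, α * ‖x‖ ^ 2 ≤ ⟪W n x, x⟫)
    (hWbdd : ∃ μ : ℝ, ∀ n, ‖W n‖ ≤ μ)
    (C : Set H) (hC : C.Nonempty) (hCcl : IsClosed C)
    (x : ℕ → H)
    (hfejer : ∃ ε η : ℕ → ℝ, (∀ n, 0 ≤ ε n) ∧ Summable ε ∧ (∀ n, 0 ≤ η n) ∧ Summable η ∧
      ∀ z ∈ C, ∀ n, ⟪W (n + 1) (x (n + 1) - z), x (n + 1) - z⟫ ≤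
        (1 + η n) * ⟪W n (x n - z), x n - z⟫ + ε n) :
    (∃ p ∈ C, Filter.Tendsto x Filter.atTop (nhds p)) ↔
      Filter.liminf (fun n => Metric.infDist (x n) C) Filter.atTop = 0 := by
  refine ⟨fun ⟨p, hp, hxp⟩ ↦ liminf_infDist_eq_zero_of_tendsto hp hxp, fun hlim ↦ ?_⟩
  obtain ⟨ε, η, hε, hεs, hη, hηs, hfejer⟩ := hfejer
  obtain ⟨μ, hμ⟩ := hWbdd
  set Θ := Real.exp (∑' i, η i)
  have htail : Tendsto (fun n ↦ √(Θ / α * ∑' k, ε (k + n))) atTop (𝓝 0) := by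
    simpa using ((tendsto_sum_nat_add ε).const_mul (Θ / α)).sqrt
  refine exists_tendsto_mem_of_liminf_infDist_eq_zero (A := √(μ * Θ / α)) hCcl hC htail
    (fun z hz n m hnm ↦ ?_) hlim
  simpa only [dist_eq_norm] using
    norm_sub_le_of_quasiFejer hα hWα hμ hε hεs hη hηs (hfejer z hz) hnm

theorem stmt_16 {H : Type*} [NormedAddCommGroup H] [InnerProductSpace ℝ H] [CompleteSpace H]
    (α : ℝ) (hα : 0 < α)
    (W : ℕ → H →L[ℝ] H) (hW : ∀ n, IsSelfAdjoint (W n))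
    (hWα : ∀ n, ∀ x : H, α * ‖x‖ ^ 2 ≤ ⟪W n x, x⟫)
    (hWbdd : ∃ μ : ℝ, ∀ n, ‖W n‖ ≤ μ)
    (C : Set H) (hC : C.Nonempty) (hCcl : IsClosed C)
    (x : ℕ → H)
    (hfejer : ∃ ε η : ℕ → ℝ, (∀ n, 0 ≤ ε n) ∧ Summable ε ∧ (∀ n, 0 ≤ η n) ∧ Summable η ∧
      ∀ z ∈ C, ∀ n, ⟪W (n + 1) (x (n + 1) - z), x (n + 1) - z⟫ ≤
        (1 + η n) * ⟪W n (x n - z), x n - z⟫ + ε n) :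
    (∃ p ∈ C, Filter.Tendsto x Filter.atTop (nhds p)) ↔
      Filter.liminf (fun n => Metric.infDist (x n) C) Filter.atTop = 0 :=
  stmt_16_general α hα W hWα hWbdd C hC hCcl x hfejer
end
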